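/- arXiv:2112.10410 — 3 statements merged into one kernel-verified Lean document; each statement's English description precedes it below -/
import Mathlib

section
/- Let N ≥ 2 be an integer that is not prime, and let p be a prime number dividing N. If p ∈ {37, 227}, then N is monomially reducible. -/
namespace Monomial

/-- The elementary matrix `[[a, -1], [1, 0]]` over `ZMod N`. -/
def mat {N : ℕ} (a : ZMod N) : Matrix (Fin 2) (Fin 2) (ZMod N) := !![a, -1; 1, 0]

/-- `M [a₁, …, aₙ] = mat aₙ * ⋯ * mat a₁`. -/
def M {N : ℕ} (l : List (ZMod N)) : Matrix (Fin 2) (Fin 2) (ZMod N) :=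
  (l.reverse.map mat).prod

/-- A tuple is a solution of (E_N) if the associated matrix is `±Id`. -/
def IsSolution {N : ℕ} (l : List (ZMod N)) : Prop := M l = 1 ∨ M l = -1

/-- The sum `(a₁,…,aₙ) ⊕ (b₁,…,bₘ) = (a₁+bₘ, a₂,…,aₙ₋₁, aₙ+b₁, b₂,…,bₘ₋₁)`. -/
def osum {N : ℕ} (u v : List (ZMod N)) : List (ZMod N) :=
  (u.headI + v.getLastD 0) ::
    ((u.drop 1).dropLast ++ (u.getLastD 0 + v.headI) :: (v.drop 1).dropLast)

/-- Equivalence: `v` is a cyclic permutation of `u` or of the reversal of `u`. -/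
def CyclicEquiv {N : ℕ} (u v : List (ZMod N)) : Prop :=
  (∃ i, v = u.rotate i) ∨ (∃ i, v = u.reverse.rotate i)

/-- A tuple is reducible if, up to equivalence, it is a sum of an `m`-tuple (`m ≥ 3`)
with a solution of size `l ≥ 3`. -/
def Reducible {N : ℕ} (c : List (ZMod N)) : Prop :=
  ∃ a b : List (ZMod N), 3 ≤ a.length ∧ 3 ≤ b.length ∧ IsSolution b ∧
    CyclicEquiv c (osum a b)

/-- An irreducible solution: a solution which is not reducible (and `(0,0)` is
not considered irreducible). -/
def IrreducibleSol {N : ℕ} (c : List (ZMod N)) : Prop :=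
  IsSolution c ∧ ¬ Reducible c ∧ c ≠ [0, 0]

/-- The size of the `k`-monomial minimal solution of (E_N): the least `n > 0` such
that the constant `n`-tuple `(k, …, k)` is a solution. -/
noncomputable def monomialMinimalSize (N : ℕ) (k : ZMod N) : ℕ :=
  sInf {n | 0 < n ∧ IsSolution (List.replicate n k)}

/-- `N` is monomially irreducible if, for every `k ≠ 0`, the `k`-monomial minimal
solution of (E_N) is irreducible. -/
def MonomiallyIrreducible (N : ℕ) : Prop :=
  ∀ k : ZMod N, k ≠ 0 → IrreducibleSol (List.replicate (monomialMinimalSize N k) k)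

/-- The continuant `Kₙ(x, …, x)` at a constant tuple: `K₀ = 1`, `K₁ = x`,
`Kₙ₊₂ = x * Kₙ₊₁ - Kₙ`. -/
def K {N : ℕ} (x : ZMod N) : ℕ → ZMod N
  | 0 => 1
  | 1 => x
  | n + 2 => x * K x (n + 1) - K x n

section Lemmas

variable {N : ℕ}

lemma getLastD_cons_concat (a d b : ZMod N) (l : List (ZMod N)) :
    (b :: (l ++ [a])).getLastD d = a := by
  rw [List.getLastD_eq_getLast?, ← List.cons_append, List.getLast?_concat]; rfl

lemma fin_two_ext {a b c d a' b' c' d' : ZMod N} (h1 : a = a') (h2 : b = b')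
    (h3 : c = c') (h4 : d = d') :
    !![a, b; c, d] = !![a', b'; c', d'] := by rw [h1, h2, h3, h4]

lemma K_zero (x : ZMod N) : K x 0 = 1 := rfl
lemma K_one (x : ZMod N) : K x 1 = x := rfl
lemma K_rec (x : ZMod N) (n : ℕ) : K x (n+2) = x * K x (n+1) - K x n := rfl

lemma M_nil : M ([] : List (ZMod N)) = 1 := rfl

lemma M_cons (a : ZMod N) (l : List (ZMod N)) : M (a :: l) = M l * mat a := by
  simp [M]

lemma M_concat (a : ZMod N) (l : List (ZMod N)) : M (l ++ [a]) = mat a * M l := by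
  simp [M]

lemma M_replicate (k : ZMod N) : ∀ n, M (List.replicate n k) = mat k ^ n
  | 0 => by simp [M_nil]
  | n + 1 => by
      rw [List.replicate_succ, M_cons, M_replicate k n, ← pow_succ]

lemma neg_one_fin_two : (-1 : Matrix (Fin 2) (Fin 2) (ZMod N)) = !![-1, 0; 0, -1] := by
  have : (-1 : Matrix (Fin 2) (Fin 2) (ZMod N)) = -(!![1, 0; 0, 1]) := by
    rw [← Matrix.one_fin_two]
  rw [this]
  ext i j
  fin_cases i <;> fin_cases j <;> simp

lemma matpow (x : ZMod N) :
    ∀ n, mat x ^ (n + 2) = !![K x (n+2), -(K x (n+1)); K x (n+1), -(K x n)]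
  | 0 => by
      rw [pow_two, mat, Matrix.mul_fin_two, K_rec, K_one, K_zero]
      apply fin_two_ext <;> ring
  | n + 1 => by
      show mat x ^ (n + 3) = !![K x (n+3), -(K x (n+2)); K x (n+2), -(K x (n+1))]
      rw [pow_succ, matpow x n, mat, Matrix.mul_fin_two,
        show K x (n+3) = x * K x (n+2) - K x (n+1) from K_rec x (n+1)]
      apply fin_two_ext
      · ring
      · ring
      · rw [K_rec x n]; ring
      · ring

lemma K_identity (x : ZMod N) :
    ∀ n, K x (n+1) * K x (n+1) - K x n * K x (n+2) = 1
  | 0 => by rw [K_rec, K_one, K_zero]; ring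
  | n + 1 => by
      show K x (n+2) * K x (n+2) - K x (n+1) * K x (n+3) = 1
      have ih := K_identity x n
      rw [show K x (n+3) = x * K x (n+2) - K x (n+1) from K_rec x (n+1)]
      linear_combination ih + K x (n+2) * K_rec x n

lemma K_map {N' : ℕ} (f : ZMod N →+* ZMod N') (x : ZMod N) :
    ∀ n, f (K x n) = K (f x) n
  | 0 => by rw [K_zero, K_zero, map_one]
  | 1 => by rw [K_one, K_one]
  | n + 2 => by
      rw [K_rec, K_rec, map_sub, map_mul, K_map f x (n+1), K_map f x n]

/-- key lemma: if `K x (n+2) = e` with `e = ±1` then there is a solution of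
size `n+4` whose middle `n+2` entries are all `x`. -/
lemma key_sol (x e : ZMod N) (n : ℕ) (he : e = 1 ∨ e = -1) (hK : K x (n+2) = e) :
    IsSolution ((e * K x (n+1)) :: (List.replicate (n+2) x ++ [e * K x (n+1)])) := by
  set q := K x (n+1) with hq
  have hKn : K x n = e * (q * q) - e := by
    have h := K_identity x n
    rw [hK, ← hq] at h
    rcases he with rfl | rfl
    · linear_combination -h
    · linear_combination h
  have hM : M ((e * q) :: (List.replicate (n+2) x ++ [e * q]))
      = mat (e * q) * (mat x ^ (n+2) * mat (e * q)) := by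
    rw [M_cons, M_concat, M_replicate, mul_assoc]
  have hpow : mat x ^ (n+2) = !![e, -q; q, -(e * (q*q) - e)] := by
    rw [matpow, hK, hKn, ← hq]
  rcases he with rfl | rfl
  · right
    rw [hM, hpow, neg_one_fin_two, mat, Matrix.mul_fin_two, Matrix.mul_fin_two]
    apply fin_two_ext <;> ring
  · left
    rw [hM, hpow, Matrix.one_fin_two, mat, Matrix.mul_fin_two, Matrix.mul_fin_two]
    apply fin_two_ext <;> ring

lemma exists_sol (hN : 2 ≤ N) (k : ZMod N) :
    ∃ n, 0 < n ∧ IsSolution (List.replicate n k) := by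
  haveI : NeZero N := ⟨by omega⟩
  have h1 : mat k * !![0, 1; -1, k] = 1 := by
    rw [mat, Matrix.mul_fin_two, Matrix.one_fin_two]
    apply fin_two_ext <;> ring
  have h2 : !![0, 1; -1, k] * mat k = 1 := by
    rw [mat, Matrix.mul_fin_two, Matrix.one_fin_two]
    apply fin_two_ext <;> ring
  let u : (Matrix (Fin 2) (Fin 2) (ZMod N))ˣ := ⟨mat k, !![0, 1; -1, k], h1, h2⟩
  refine ⟨orderOf u, orderOf_pos u, Or.inl ?_⟩
  rw [M_replicate]
  have h3 : (u : Matrix (Fin 2) (Fin 2) (ZMod N)) ^ orderOf u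
      = ((u ^ orderOf u : (Matrix (Fin 2) (Fin 2) (ZMod N))ˣ) : Matrix (Fin 2) (Fin 2) (ZMod N)) := by
    rw [Units.val_pow_eq_pow_val]
  rw [show mat k = (u : Matrix (Fin 2) (Fin 2) (ZMod N)) from rfl, h3,
    pow_orderOf_eq_one u, Units.val_one]

lemma entry_zero {A : Matrix (Fin 2) (Fin 2) (ZMod N)} (h : A = 1 ∨ A = -1) :
    A 1 0 = 0 := by
  rcases h with rfl | rfl
  · rw [Matrix.one_fin_two]; rfl
  · rw [neg_one_fin_two]; rfl

lemma reducible_replicate (k w : ZMod N) (j m2 : ℕ) (hj : 1 ≤ j) (hm : 1 ≤ m2)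
    (hb : IsSolution (w :: (List.replicate j k ++ [w]))) :
    Reducible (List.replicate (m2 + j + 2) k) := by
  refine ⟨(k - w) :: (List.replicate m2 k ++ [k - w]),
    w :: (List.replicate j k ++ [w]), ?_, ?_, hb, Or.inl ⟨0, ?_⟩⟩
  · simp; omega
  · simp; omega
  · rw [List.rotate_zero, osum]
    rw [getLastD_cons_concat, getLastD_cons_concat]
    simp only [List.headI, List.drop, List.dropLast_concat]
    rw [sub_add_cancel]
    rw [show m2 + j + 2 = (m2 + (j + 1)) + 1 by ring, List.replicate_succ,
      List.replicate_add, List.replicate_succ]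

lemma not_MI_of_k (hN : 2 ≤ N) (k w : ZMod N) (hk : k ≠ 0) (j : ℕ) (hj : 1 ≤ j)
    (hb : IsSolution (w :: (List.replicate j k ++ [w])))
    (hsmall : ∀ i, 0 < i → i ≤ j + 2 → ¬ IsSolution (List.replicate i k)) :
    ¬ MonomiallyIrreducible N := by
  intro hMI
  obtain ⟨hsol, hnred, hne⟩ := hMI k hk
  have hmem : 0 < monomialMinimalSize N k ∧
      IsSolution (List.replicate (monomialMinimalSize N k) k) :=
    Nat.sInf_mem (exists_sol hN k)
  set n := monomialMinimalSize N k with hn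
  have hge : j + 3 ≤ n := by
    by_contra h'
    exact hsmall n hmem.1 (by omega) hmem.2
  have hred : Reducible (List.replicate n k) := by
    have h := reducible_replicate k w j (n - j - 2) hj (by omega) hb
    rwa [show n - j - 2 + j + 2 = n by omega] at h
  exact hnred hred

end Lemmas

section Cases

lemma coprime_case_gen (p m : ℕ) (k₁ : ZMod p) (hp2 : 2 ≤ p) (hm : 2 ≤ m)
    (co : Nat.Coprime p m) (hk₁ : k₁ ≠ 0) (h19 : K k₁ 19 = 1)
    (hz : ∀ t : Fin 21, (t : ℕ) ≠ 18 → K k₁ (t : ℕ) ≠ 0) :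
    ¬ MonomiallyIrreducible (p * m) := by
  haveI : Fact (1 < p) := ⟨by omega⟩
  haveI : Fact (1 < m) := ⟨by omega⟩
  have hN2 : 2 ≤ p * m := le_trans hm (Nat.le_mul_of_pos_left m (by omega))
  haveI : Fact (1 < p * m) := ⟨by omega⟩
  set ψ := ZMod.chineseRemainder co with hψ
  set k : ZMod (p * m) := ψ.symm (k₁, 1) with hkdef
  have hψk : ψ k = (k₁, 1) := by rw [hkdef]; exact ψ.apply_symm_apply _
  set πp : ZMod (p*m) →+* ZMod p := (RingHom.fst (ZMod p) (ZMod m)).comp ψ.toRingHom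
    with hπpdef
  set πm : ZMod (p*m) →+* ZMod m := (RingHom.snd (ZMod p) (ZMod m)).comp ψ.toRingHom
    with hπmdef
  have hπp : ∀ x : ZMod (p*m), πp x = (ψ x).1 := fun x => rfl
  have hπm : ∀ x : ZMod (p*m), πm x = (ψ x).2 := fun x => rfl
  have hπpk : πp k = k₁ := by rw [hπp, hψk]
  have hπmk : πm k = 1 := by rw [hπm, hψk]
  have hk0 : k ≠ 0 := by
    intro h0
    have h1 : ψ k = ψ 0 := by rw [h0]
    rw [hψk, map_zero] at h1
    exact hk₁ (by simpa using congrArg Prod.fst h1)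
  have hKk19 : K k 19 = 1 := by
    apply ψ.injective
    rw [map_one]
    have h1 : (ψ (K k 19)).1 = 1 := by
      rw [← hπp, K_map πp k 19, hπpk, h19]
    have h2 : (ψ (K k 19)).2 = 1 := by
      rw [← hπm, K_map πm k 19, hπmk]
      simp [K]
    rw [show (1 : ZMod p × ZMod m) = (1, 1) from rfl]
    exact Prod.ext h1 h2
  have hb : IsSolution ((1 * K k 18) :: (List.replicate 19 k ++ [1 * K k 18])) := by
    have h' : K k (17+2) = 1 := hKk19
    exact key_sol k 1 17 (Or.inl rfl) h'
  have hsmall : ∀ i, 0 < i → i ≤ 21 → ¬ IsSolution (List.replicate i k) := by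
    intro i hi1 hi2 hS
    replace hS : M (List.replicate i k) = 1 ∨ M (List.replicate i k) = -1 := hS
    rw [M_replicate] at hS
    rcases Nat.lt_or_ge i 2 with hlt | hge
    · have : i = 1 := by omega
      subst this
      rw [pow_one] at hS
      have h0 := entry_zero hS
      rw [mat] at h0
      simp at h0
    · obtain ⟨t, rfl⟩ : ∃ t, i = t + 2 := ⟨i - 2, by omega⟩
      rw [matpow] at hS
      have hzero : K k (t+1) = 0 := by
        have h0 := entry_zero hS
        simpa using h0
      by_cases ht : t = 17
      · subst ht
        have h1 : K (1 : ZMod m) 18 = 0 := by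
          rw [← hπmk, ← K_map πm k 18, hzero, map_zero]
        rw [show K (1 : ZMod m) 18 = 1 by simp [K]] at h1
        exact one_ne_zero h1
      · have h1 : K k₁ (t+1) = 0 := by
          rw [← hπpk, ← K_map πp k (t+1), hzero, map_zero]
        exact hz ⟨t+1, by omega⟩ (by simp; omega) h1
  exact not_MI_of_k hN2 k (1 * K k 18) hk0 19 (by omega) hb hsmall

lemma sq_case (N p : ℕ) (hN : 2 ≤ N) (hp3 : 3 ≤ p) (hsq : p * p ∣ N) :
    ¬ MonomiallyIrreducible N := by
  haveI : NeZero N := ⟨by omega⟩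
  haveI : Fact (1 < N) := ⟨by omega⟩
  obtain ⟨s, hs⟩ := hsq
  have hs1 : 1 ≤ s := by
    rcases Nat.eq_zero_or_pos s with rfl | h
    · omega
    · omega
  have hp0 : 0 < p := by omega
  have hNp : N / p = p * s := by rw [hs, mul_assoc, Nat.mul_div_cancel_left _ hp0]
  set k : ZMod N := ((N / p : ℕ) : ZMod N) with hkdef
  have hkk : k * k = 0 := by
    rw [hkdef, ← Nat.cast_mul, ZMod.natCast_eq_zero_iff]
    refine ⟨s, ?_⟩
    rw [hNp, hs]; ring
  have hk0 : k ≠ 0 := by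
    rw [hkdef, Ne, ZMod.natCast_eq_zero_iff]
    intro hd
    have hpos : 0 < N / p := by rw [hNp]; nlinarith
    have hle := Nat.le_of_dvd hpos hd
    rw [hNp, hs] at hle
    nlinarith
  have h2k : (2 : ZMod N) * k ≠ 0 := by
    rw [hkdef, show ((2 : ZMod N) * ((N/p : ℕ) : ZMod N) = ((2 * (N/p) : ℕ) : ZMod N)) by
      push_cast; ring, Ne, ZMod.natCast_eq_zero_iff]
    intro hd
    have hpos : 0 < 2 * (N / p) := by rw [hNp]; nlinarith
    have hle := Nat.le_of_dvd hpos hd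
    rw [hNp, hs] at hle
    nlinarith
  have hK2 : K k (0 + 2) = -1 := by rw [K_rec, K_one, K_zero, hkk]; ring
  have hb := key_sol k (-1) 0 (Or.inr rfl) hK2
  have hsmall : ∀ i, 0 < i → i ≤ 4 → ¬ IsSolution (List.replicate i k) := by
    intro i h1 h4 hS
    replace hS : M (List.replicate i k) = 1 ∨ M (List.replicate i k) = -1 := hS
    rw [M_replicate] at hS
    interval_cases i
    · rw [pow_one] at hS
      have h0 := entry_zero hS
      rw [mat] at h0
      simp at h0
    · replace hS : mat k ^ (0+2) = 1 ∨ mat k ^ (0+2) = -1 := hS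
      rw [matpow] at hS
      have h0 := entry_zero hS
      simp [K_one] at h0
      exact hk0 h0
    · replace hS : mat k ^ (1+2) = 1 ∨ mat k ^ (1+2) = -1 := hS
      rw [matpow] at hS
      have h0 := entry_zero hS
      have h0' : K k (0+2) = 0 := h0
      rw [K_rec, K_one, K_zero, hkk] at h0'
      have hcon : (-1 : ZMod N) = 0 := by rw [← h0']; ring
      simp at hcon
    · replace hS : mat k ^ (2+2) = 1 ∨ mat k ^ (2+2) = -1 := hS
      rw [matpow] at hS
      have h0 := entry_zero hS
      have h0' : k * K k (0+2) - K k 1 = 0 := h0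
      rw [K_rec, K_one, K_zero] at h0'
      have h2 : (2 : ZMod N) * k = 0 := by linear_combination -h0' + k * hkk
      exact h2k h2
  exact not_MI_of_k hN k (-1 * K k 1) hk0 2 (by omega) hb hsmall

end Cases

theorem stmt12 (N p : ℕ) (hN : 2 ≤ N) (hnp : ¬ N.Prime) (hp : p.Prime)
    (hdvd : p ∣ N) (h : p ∈ ({37, 227} : Set ℕ)) :
    ¬ MonomiallyIrreducible N := by
  have hp2 : p = 37 ∨ p = 227 := by simpa using h
  by_cases hsq : p * p ∣ N
  · exact sq_case N p hN (by rcases hp2 with rfl | rfl <;> norm_num) hsq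
  · obtain ⟨m, rfl⟩ := hdvd
    have hm0 : m ≠ 0 := by rintro rfl; simp at hN
    have hm1 : m ≠ 1 := by
      rintro rfl
      rw [mul_one] at hnp
      exact hnp hp
    have hpm : ¬ p ∣ m := by
      intro hd
      obtain ⟨t, rfl⟩ := hd
      exact hsq ⟨t, by ring⟩
    have co : Nat.Coprime p m := (Nat.Prime.coprime_iff_not_dvd hp).2 hpm
    rcases hp2 with rfl | rfl
    · exact coprime_case_gen 37 m 7 (by norm_num) (by omega) co (by decide) (by decide)
        (by decide)
    · exact coprime_case_gen 227 m 19 (by norm_num) (by omega) co (by decide) (by decide)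
        (by decide)

end Monomial
end

section
/- Let k ≥ 2 and m ≥ 2 be integers, let N = k·m, and let l be an integer with m ≡ −l (mod k) and l² ≡ 1 (mod k). Then for every natural number n, writing n = 6q + r with q a natural number and 0 ≤ r ≤ 5, one has in ℤ/Nℤ: K_n(lm+2) = K_r(lm+2) + 6q(lm+1) (all quantities reduced mod N). -/
namespace Monomial

private lemma K_per {N : ℕ} (t : ZMod N) (ht : t * t = t) :
    ∀ n, K (t + 1) (n + 6) = K (t + 1) n + 6 * t
  | 0 => by
      show K (t+1) 6 = K (t+1) 0 + 6 * t
      simp only [K]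
      linear_combination (8 + 17*t + 17*t^2 + 7*t^3 + t^4) * ht
  | 1 => by
      show K (t+1) 7 = K (t+1) 1 + 6 * t
      simp only [K]
      linear_combination (4 + 13*t + 28*t^2 + 23*t^3 + 8*t^4 + t^5) * ht
  | (n + 2) => by
      have e1 := K_per t ht n
      have e2 := K_per t ht (n + 1)
      show K (t+1) (n + 6 + 2) = K (t+1) (n + 2) + 6 * t
      rw [K, show n + 6 + 1 = n + 1 + 6 from rfl, e2, e1, K]
      linear_combination 6 * ht

theorem stmt13 (k m : ℕ) (hk : 2 ≤ k) (hm : 2 ≤ m) (l : ℤ)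
    (h1 : (m : ℤ) ≡ -l [ZMOD (k : ℤ)]) (h2 : l ^ 2 ≡ 1 [ZMOD (k : ℤ)]) :
    ∀ n q r : ℕ, r ≤ 5 → n = 6 * q + r →
      K ((l * m + 2 : ℤ) : ZMod (k * m)) n =
        K ((l * m + 2 : ℤ) : ZMod (k * m)) r +
          ((6 * q * (l * m + 1) : ℤ) : ZMod (k * m)) := by
  intro n q r hr hn
  have h3 : l * m + 1 ≡ 0 [ZMOD (k : ℤ)] := by
    calc l * m + 1 ≡ l * (-l) + 1 [ZMOD (k:ℤ)] := (h1.mul_left l).add_right 1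
      _ = -(l ^ 2) + 1 := by ring
      _ ≡ -1 + 1 [ZMOD (k:ℤ)] := (h2.neg).add_right 1
      _ = 0 := by ring
  have hk1 : (k : ℤ) ∣ l * m + 1 := (Int.modEq_zero_iff_dvd).mp h3
  obtain ⟨c, hc⟩ := hk1
  set t : ZMod (k * m) := ((l * m + 1 : ℤ) : ZMod (k * m)) with htdef
  have ht : t * t = t := by
    have hdvd : ((k * m : ℕ) : ℤ) ∣ (l * m + 1) * (l * m + 1) - (l * m + 1) := by
      push_cast
      exact ⟨c * l, by linear_combination (l * (m : ℤ)) * hc⟩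
    have h0 := (ZMod.intCast_zmod_eq_zero_iff_dvd _ (k * m)).mpr hdvd
    push_cast at h0
    rw [htdef]
    push_cast
    linear_combination h0
  have hx : ((l * m + 2 : ℤ) : ZMod (k * m)) = t + 1 := by
    rw [htdef]; push_cast; ring
  subst hn
  rw [hx]
  induction q with
  | zero =>
      simp
  | succ q ih =>
      have : 6 * (q + 1) + r = (6 * q + r) + 6 := by ring
      rw [this, K_per t ht, ih]
      rw [htdef]
      push_cast
      ring


end Monomial
end

section
/- Let k ≥ 2 and m ≥ 2 be integers, let N = k·m, and let l be an integer with m ≡ l (mod k) and l² ≡ 1 (mod k). Then for every natural number n, writing n = 6q + r with q a natural number and 0 ≤ r ≤ 5, one has in ℤ/Nℤ: K_n(lm−2) = K_r(lm−2) + (−1)^{n+1}·6q(lm−1) (all quantities reduced mod N). -/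
namespace Monomial

theorem stmt14 (k m : ℕ) (hk : 2 ≤ k) (hm : 2 ≤ m) (l : ℤ)
    (h1 : (m : ℤ) ≡ l [ZMOD (k : ℤ)]) (h2 : l ^ 2 ≡ 1 [ZMOD (k : ℤ)]) :
    ∀ n q r : ℕ, r ≤ 5 → n = 6 * q + r →
      K ((l * m - 2 : ℤ) : ZMod (k * m)) n =
        K ((l * m - 2 : ℤ) : ZMod (k * m)) r +
          (((-1 : ℤ) ^ (n + 1) * (6 * q * (l * m - 1)) : ℤ) : ZMod (k * m)) := by
  intro n q r hr hn
  set N := k * m with hN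
  set t : ZMod N := ((l * m : ℤ) : ZMod N) with htdef
  set x : ZMod N := ((l * m - 2 : ℤ) : ZMod N) with hxdef
  have hx : x = t - 2 := by rw [hxdef, htdef]; push_cast; ring
  have ht : t ^ 2 = t := by
    have hk1 : (k : ℤ) ∣ l ^ 2 * m - l := by
      have h3 : l ^ 2 * m ≡ 1 * m [ZMOD (k : ℤ)] := h2.mul_right m
      have h4 : (1 : ℤ) * m ≡ l [ZMOD (k : ℤ)] := by simpa using h1
      exact dvd_sub_comm.mp (h3.trans h4).dvd
    have hdvd : ((N : ℤ)) ∣ (l * m) ^ 2 - l * m := by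
      have : ((k : ℤ) * m) ∣ (l ^ 2 * m - l) * m := mul_dvd_mul_right hk1 m
      rw [hN]; push_cast
      calc ((k : ℤ) * m) ∣ (l ^ 2 * m - l) * m := this
        _ = (l * m) ^ 2 - l * m := by ring
    have h0 : (((l * m) ^ 2 - l * m : ℤ) : ZMod N) = 0 :=
      (ZMod.intCast_zmod_eq_zero_iff_dvd _ N).mpr hdvd
    rw [htdef]
    push_cast at h0 ⊢
    linear_combination h0
  have e0 : K x 0 = 1 := rfl
  have e1 : K x 1 = x := rfl
  have step : ∀ j, K x (j + 2) = x * K x (j + 1) - K x j := fun _ => rfl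
  have e2 : K x 2 = 3 - 3 * t := by rw [step 0, e1, e0, hx]; linear_combination ht
  have e3 : K x 3 = 5 * t - 4 := by rw [step 1, e2, e1, hx]; linear_combination (-3) * ht
  have e4 : K x 4 = 5 - 6 * t := by rw [step 2, e3, e2, hx]; linear_combination 5 * ht
  have e5 : K x 5 = 6 * t - 6 := by rw [step 3, e4, e3, hx]; linear_combination (-6) * ht
  have e6 : K x 6 = 7 - 6 * t := by rw [step 4, e5, e4, hx]; linear_combination 6 * ht
  have e7 : K x 7 = 7 * t - 8 := by rw [step 5, e6, e5, hx]; linear_combination (-6) * ht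
  have key : ∀ j, K x (j + 6) = K x j + (-1 : ZMod N) ^ (j + 1) * (6 * (t - 1)) ∧
      K x (j + 7) = K x (j + 1) + (-1 : ZMod N) ^ (j + 2) * (6 * (t - 1)) := by
    intro j
    induction j with
    | zero =>
      refine ⟨?_, ?_⟩
      · rw [show (0 + 6 : ℕ) = 6 from rfl, e6, e0]; ring
      · rw [show (0 + 7 : ℕ) = 7 from rfl, e7, e1, hx]; ring
    | succ j ih =>
      refine ⟨ih.2, ?_⟩
      have h8 : K x (j + 1 + 7) = x * K x (j + 7) - K x (j + 6) := step (j + 6)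
      rw [h8, ih.1, ih.2, show j + 1 + 1 = j + 2 from rfl, step j, hx]
      ring_nf
      linear_combination (6 * (-1 : ZMod N) ^ j) * ht
  have main : ∀ p : ℕ, K x (6 * p + r) =
      K x r + (-1 : ZMod N) ^ (6 * p + r + 1) * (6 * (p : ZMod N) * (t - 1)) := by
    intro p
    induction p with
    | zero => simp
    | succ p ih =>
      have h6 : 6 * (p + 1) + r = (6 * p + r) + 6 := by ring
      rw [h6, (key (6 * p + r)).1, ih]
      push_cast
      ring
  subst hn
  rw [main q]
  have hlm : ((l : ℤ) : ZMod N) * ((m : ℕ) : ZMod N) = t := by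
    rw [htdef]; push_cast; ring
  push_cast
  ring_nf
  rw [hx]
  ring_nf
  linear_combination (6 * (q : ZMod N) * (-1 : ZMod N) ^ (q * 6) * (-1 : ZMod N) ^ r) * hlm

end Monomial
end
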